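/- Let u, ω : ℝ² → ℝ be smooth functions of (x,t). With the 4×4 matrices a = [[0,D],[D,0]] (D = diag(1,2)), b = [[I₂,0],[0,R(u)]], v = [[ρ(ω),0],[0,0]], σ₁(X) = S X S with S = diag(−1,−1,−1,1), and A(λ) = b a b⁻¹ λ + v + σ₁(b a b⁻¹) λ⁻¹, the equation ∂_t A(λ) = ∂_x A(λ) holds for all real λ ≠ 0 (i.e. [∂_x + A(λ), ∂_t + A(λ)] = 0) if and only if ∂_t u = ∂_x u and ∂_t ω = ∂_x ω. -/

import Mathlib

/- STATEMENT 3: the first flow of the twisted O(J,J)/(O(J)×O(J))-hierarchy with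
   (n,q)=(2,0), a = ã (w₁=1, w₂=2), is the trivial linear system
   ∂_t u = ∂_x u, ∂_t ω = ∂_x ω (first part of Example 2.5). -/

noncomputable section

open Matrix Real

/-- partial derivative in the first (x) variable -/
def px (f : ℝ → ℝ → ℝ) (x t : ℝ) : ℝ := deriv (fun s => f s t) x

/-- partial derivative in the second (t) variable -/
def pt (f : ℝ → ℝ → ℝ) (x t : ℝ) : ℝ := deriv (fun s => f x s) t

/-- entrywise partial derivative in x of a matrix-valued function -/
def pxM (f : ℝ → ℝ → Matrix (Fin 4) (Fin 4) ℝ) (x t : ℝ) : Matrix (Fin 4) (Fin 4) ℝ :=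
  Matrix.of fun i j => deriv (fun s => f s t i j) x

/-- entrywise partial derivative in t of a matrix-valued function -/
def ptM (f : ℝ → ℝ → Matrix (Fin 4) (Fin 4) ℝ) (x t : ℝ) : Matrix (Fin 4) (Fin 4) ℝ :=
  Matrix.of fun i j => deriv (fun s => f x s i j) t

/-- a = [[0,D],[D,0]] with D = diag(1,2) -/
def amat : Matrix (Fin 4) (Fin 4) ℝ := !![0,0,1,0; 0,0,0,2; 1,0,0,0; 0,2,0,0]

/-- S = diag(−1,−1,−1,1) -/
def S : Matrix (Fin 4) (Fin 4) ℝ := !![-1,0,0,0; 0,-1,0,0; 0,0,-1,0; 0,0,0,1]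

/-- σ₁(X) = S X S -/
def sigma1 (X : Matrix (Fin 4) (Fin 4) ℝ) : Matrix (Fin 4) (Fin 4) ℝ := S * X * S

/-- v = [[ρ(ω),0],[0,0]] with ρ(s) = [[0,−s],[s,0]] -/
def vmat (s : ℝ → ℝ → ℝ) (x t : ℝ) : Matrix (Fin 4) (Fin 4) ℝ :=
  !![0, -(s x t), 0, 0; s x t, 0, 0, 0; 0, 0, 0, 0; 0, 0, 0, 0]

/-- b = [[I₂,0],[0,R(u)]] with R(θ) = [[cos θ, sin θ],[−sin θ, cos θ]] -/
def bmat (u : ℝ → ℝ → ℝ) (x t : ℝ) : Matrix (Fin 4) (Fin 4) ℝ :=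
  !![1,0,0,0;
     0,1,0,0;
     0,0, Real.cos (u x t), Real.sin (u x t);
     0,0, -Real.sin (u x t), Real.cos (u x t)]

/-- A(λ) = b a b⁻¹ λ + v + σ₁(b a b⁻¹) λ⁻¹ -/
def Amat (u ω : ℝ → ℝ → ℝ) (lam : ℝ) (x t : ℝ) : Matrix (Fin 4) (Fin 4) ℝ :=
  lam • (bmat u x t * amat * (bmat u x t)⁻¹) + vmat ω x t
    + lam⁻¹ • sigma1 (bmat u x t * amat * (bmat u x t)⁻¹)

lemma binv (u : ℝ → ℝ → ℝ) (x t : ℝ) : (bmat u x t)⁻¹ =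
  !![1,0,0,0;0,1,0,0;0,0,Real.cos (u x t), -Real.sin (u x t);0,0,Real.sin (u x t), Real.cos (u x t)] := by
  apply Matrix.inv_eq_right_inv
  ext i j
  fin_cases i <;> fin_cases j <;>
    simp [bmat, Matrix.mul_apply, Fin.sum_univ_four, Matrix.one_apply, Matrix.vecHead,
      Matrix.vecTail] <;>
    nlinarith [Real.sin_sq_add_cos_sq (u x t)]

lemma Mlem (u : ℝ → ℝ → ℝ) (x t : ℝ) : bmat u x t * amat * (bmat u x t)⁻¹ =
  !![0,0, Real.cos (u x t), -Real.sin (u x t);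
     0,0, 2*Real.sin (u x t), 2*Real.cos (u x t);
     Real.cos (u x t), 2*Real.sin (u x t), 0, 0;
     -Real.sin (u x t), 2*Real.cos (u x t), 0, 0] := by
  rw [binv]
  ext i j
  fin_cases i <;> fin_cases j <;>
    simp [bmat, amat, Matrix.mul_apply, Fin.sum_univ_four, Matrix.vecHead, Matrix.vecTail] <;> ring

set_option maxHeartbeats 1000000 in
lemma sig (c s : ℝ) : sigma1 !![0,0,c,-s; 0,0,2*s,2*c; c,2*s,0,0; -s,2*c,0,0] =
    !![0,0,c,s; 0,0,2*s,-(2*c); c,2*s,0,0; s,-(2*c),0,0] := by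
  unfold sigma1 S
  ext i j
  fin_cases i <;> fin_cases j <;>
    simp [Matrix.mul_apply, Fin.sum_univ_four, Matrix.vecHead, Matrix.vecTail]

lemma Amat_eq (u ω : ℝ → ℝ → ℝ) (lam x t : ℝ) : Amat u ω lam x t =
  !![0, -(ω x t), (lam+lam⁻¹)*Real.cos (u x t), (lam⁻¹-lam)*Real.sin (u x t);
     ω x t, 0, ((lam+lam⁻¹)*2)*Real.sin (u x t), ((lam-lam⁻¹)*2)*Real.cos (u x t);
     (lam+lam⁻¹)*Real.cos (u x t), ((lam+lam⁻¹)*2)*Real.sin (u x t), 0, 0;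
     (lam⁻¹-lam)*Real.sin (u x t), ((lam-lam⁻¹)*2)*Real.cos (u x t), 0, 0] := by
  rw [Amat, Mlem, sig]
  unfold vmat
  ext i j
  fin_cases i <;> fin_cases j <;>
    simp [Matrix.vecHead, Matrix.vecTail] <;> ring

theorem firstFlow_trivial (u ω : ℝ → ℝ → ℝ)
    (hu : ContDiff ℝ (⊤ : ℕ∞) (Function.uncurry u))
    (hω : ContDiff ℝ (⊤ : ℕ∞) (Function.uncurry ω)) :
    (∀ lam : ℝ, lam ≠ 0 → ∀ x t : ℝ,
        ptM (fun x t => Amat u ω lam x t) x t = pxM (fun x t => Amat u ω lam x t) x t)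
    ↔ (∀ x t : ℝ, pt u x t = px u x t ∧ pt ω x t = px ω x t) := by
  -- differentiability of partial maps
  have hux : ∀ x t : ℝ, HasDerivAt (fun s => u s t) (px u x t) x := by
    intro x t
    have : DifferentiableAt ℝ (fun s => u s t) x :=
      ((hu.differentiable (by simp)).comp (differentiable_id.prodMk (differentiable_const t))).differentiableAt
    exact this.hasDerivAt
  have hut : ∀ x t : ℝ, HasDerivAt (fun s => u x s) (pt u x t) t := by
    intro x t
    have : DifferentiableAt ℝ (fun s => u x s) t :=
      ((hu.differentiable (by simp)).comp ((differentiable_const x).prodMk differentiable_id)).differentiableAt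
    exact this.hasDerivAt
  have hωx : ∀ x t : ℝ, HasDerivAt (fun s => ω s t) (px ω x t) x := by
    intro x t
    have : DifferentiableAt ℝ (fun s => ω s t) x :=
      ((hω.differentiable (by simp)).comp (differentiable_id.prodMk (differentiable_const t))).differentiableAt
    exact this.hasDerivAt
  have hωt : ∀ x t : ℝ, HasDerivAt (fun s => ω x s) (pt ω x t) t := by
    intro x t
    have : DifferentiableAt ℝ (fun s => ω x s) t :=
      ((hω.differentiable (by simp)).comp ((differentiable_const x).prodMk differentiable_id)).differentiableAt
    exact this.hasDerivAt
  constructor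
  · intro h x t
    -- ω-equation from entry (0,1) at λ = 1
    have h01 := congrFun (congrFun (h 1 one_ne_zero x t) 0) 1
    simp only [ptM, pxM, Matrix.of_apply] at h01
    have e1 : (fun s => Amat u ω 1 x s 0 1) = fun s => -(ω x s) := by
      funext s; rw [Amat_eq]; norm_num
    have e2 : (fun s => Amat u ω 1 s t 0 1) = fun s => -(ω s t) := by
      funext s; rw [Amat_eq]; norm_num
    rw [e1, e2, ((hωt x t).fun_neg).deriv, ((hωx x t).fun_neg).deriv] at h01
    -- sin-equation from entry (0,2) at λ = 1
    have h02 := congrFun (congrFun (h 1 one_ne_zero x t) 0) 2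
    simp only [ptM, pxM, Matrix.of_apply] at h02
    have e3 : (fun s => Amat u ω 1 x s 0 2) = fun s => (2:ℝ) * Real.cos (u x s) := by
      funext s; rw [Amat_eq]; norm_num; rfl
    have e4 : (fun s => Amat u ω 1 s t 0 2) = fun s => (2:ℝ) * Real.cos (u s t) := by
      funext s; rw [Amat_eq]; norm_num; rfl
    rw [e3, e4, ((hut x t).cos.const_mul 2).deriv, ((hux x t).cos.const_mul 2).deriv] at h02
    have h02' : Real.sin (u x t) * pt u x t = Real.sin (u x t) * px u x t := by
      nlinarith [h02]
    -- cos-equation from entry (0,3) at λ = 2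
    have h03 := congrFun (congrFun (h 2 two_ne_zero x t) 0) 3
    simp only [ptM, pxM, Matrix.of_apply] at h03
    have e5 : (fun s => Amat u ω 2 x s 0 3) = fun s => ((2:ℝ)⁻¹ - 2) * Real.sin (u x s) := by
      funext s; rw [Amat_eq]
      norm_num; rfl
    have e6 : (fun s => Amat u ω 2 s t 0 3) = fun s => ((2:ℝ)⁻¹ - 2) * Real.sin (u s t) := by
      funext s; rw [Amat_eq]
      norm_num; rfl
    rw [e5, e6, ((hut x t).sin.const_mul _).deriv, ((hux x t).sin.const_mul _).deriv] at h03
    have h03' : Real.cos (u x t) * pt u x t = Real.cos (u x t) * px u x t := by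
      nlinarith [h03]
    refine ⟨?_, by linarith⟩
    linear_combination Real.sin (u x t) * h02' + Real.cos (u x t) * h03'
      - (pt u x t - px u x t) * Real.sin_sq_add_cos_sq (u x t)
  · intro h lam hlam x t
    have hc : ∀ c x t : ℝ, deriv (fun s => c * Real.cos (u x s)) t
        = deriv (fun s => c * Real.cos (u s t)) x := by
      intro c x t
      rw [((hut x t).cos.const_mul c).deriv, ((hux x t).cos.const_mul c).deriv, (h x t).1]
    have hs : ∀ c x t : ℝ, deriv (fun s => c * Real.sin (u x s)) t
        = deriv (fun s => c * Real.sin (u s t)) x := by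
      intro c x t
      rw [((hut x t).sin.const_mul c).deriv, ((hux x t).sin.const_mul c).deriv, (h x t).1]
    have hw1 : deriv (fun s => -(ω x s)) t = deriv (fun s => -(ω s t)) x := by
      rw [((hωt x t).fun_neg).deriv, ((hωx x t).fun_neg).deriv, (h x t).2]
    have hw2 : deriv (fun s => ω x s) t = deriv (fun s => ω s t) x := by
      rw [(hωt x t).deriv, (hωx x t).deriv, (h x t).2]
    have hc0 : deriv (fun s => Real.cos (u x s)) t = deriv (fun s => Real.cos (u s t)) x := by
      rw [(hut x t).cos.deriv, (hux x t).cos.deriv, (h x t).1]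
    have hs0 : deriv (fun s => Real.sin (u x s)) t = deriv (fun s => Real.sin (u s t)) x := by
      rw [(hut x t).sin.deriv, (hux x t).sin.deriv, (h x t).1]
    ext i j
    simp only [ptM, pxM, Matrix.of_apply, Amat_eq]
    fin_cases i <;> fin_cases j <;>
      simp only [Matrix.cons_val', Matrix.cons_val_zero, Matrix.cons_val_one, Matrix.head_cons,
        Matrix.empty_val', Matrix.cons_val_fin_one, Matrix.head_fin_const, Matrix.cons_val_two,
        Matrix.cons_val_three, Matrix.tail_cons, Matrix.vecHead, Matrix.vecTail,
        Function.comp_apply, Fin.isValue] <;>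
      first
        | exact hw1
        | exact hw2
        | exact hc _ x t
        | exact hs _ x t
        | exact Or.inl hc0
        | exact Or.inl hs0
        | simp

end
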